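/- With the setup below, for any path P_i of L, if a vertex x₁ precedes a vertex x₂ on P_i, then there are no vertices y₁, y₂ ∈ V(H) such that x₁y₁ ∈ A(D) and y₂x₂ ∈ A(D). In particular, on each path P_i, every vertex of F precedes every vertex of R. -/

import Mathlib

/-- A digraph (given by its arc relation `A`) is *semicomplete* if for every pair of
distinct vertices there is at least one arc between them. -/
def Semicomplete {V : Type*} (A : V → V → Prop) : Prop :=
  ∀ x y : V, x ≠ y → A x y ∨ A y x

/-- `p` is a directed path from `s` to `t` in the digraph with arc relation `A`,
encoded as a nonempty list of distinct vertices in which consecutive vertices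
are joined by arcs. -/
def IsDipath {V : Type*} (A : V → V → Prop) (p : List V) (s t : V) : Prop :=
  p ≠ [] ∧ p.Nodup ∧ p.Chain' A ∧ p.head? = some s ∧ p.getLast? = some t

/-- An `S`-`T` path system: `k` directed paths `P i`, where `P i` goes from `s`
to `t i`, and any two distinct paths meet exactly in `s`. -/
def IsSTSystem {V : Type*} (A : V → V → Prop) {k : ℕ} (s : V) (t : Fin k → V)
    (P : Fin k → List V) : Prop :=
  (∀ i, IsDipath A (P i) s (t i)) ∧
  ∀ i j, i ≠ j → ∀ v, v ∈ P i → v ∈ P j → v = s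

/-- The set of vertices covered by a path system. -/
def coverSet {V : Type*} {k : ℕ} (P : Fin k → List V) : Set V := {v | ∃ i, v ∈ P i}

def RelH {V : Type*} (A : V → V → Prop) (VH : Set V) : V → V → Prop :=
  fun a b => a ∈ VH ∧ b ∈ VH ∧ A a b

/-- From reachability within `VH` extract a nodup path. -/
lemma reach_path {V : Type*} {A : V → V → Prop} {VH : Set V} {y z : V}
    (h : Relation.ReflTransGen (RelH A VH) y z) (hy : y ∈ VH) :
    ∃ q : List V, q ≠ [] ∧ q.Nodup ∧ (∀ x ∈ q, x ∈ VH) ∧ q.Chain' A ∧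
      q.head? = some y ∧ q.getLast? = some z := by
  induction h using Relation.ReflTransGen.head_induction_on with
  | refl =>
    exact ⟨[z], by simp, by simp, by simpa using hy, List.isChain_singleton z, rfl, rfl⟩
  | @head a b hab hrest ih =>
    obtain ⟨ha, hb, hAab⟩ := hab
    obtain ⟨q, hq, hnd, hVH, hch, hhd, hlst⟩ := ih hb
    by_cases hmem : a ∈ q
    · obtain ⟨q₁, q₂, rfl⟩ := List.append_of_mem hmem
      refine ⟨a :: q₂, by simp, ?_, ?_, ?_, rfl, ?_⟩
      · exact hnd.sublist (List.sublist_append_right _ _)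
      · intro x hx; exact hVH x (by simp at hx ⊢; tauto)
      · exact (List.isChain_append.mp hch).2.1
      · rw [← List.getLast?_append_of_ne_nil q₁ (by simp)]; exact hlst
    · refine ⟨a :: q, by simp, by simp [hnd, hmem], ?_, ?_, rfl, ?_⟩
      · intro x hx; rcases List.mem_cons.mp hx with rfl | hx
        · exact ha
        · exact hVH x hx
      · refine List.isChain_cons.mpr ⟨?_, hch⟩
        intro y' hy'; rw [hhd] at hy'; cases hy'; exact hAab
      · rw [show a :: q = [a] ++ q from rfl,
          List.getLast?_append_of_ne_nil [a] hq]; exact hlst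

lemma exists_king {V : Type*} [Fintype V] {A : V → V → Prop} (hsc : Semicomplete A)
    (VH : Set V) (hne : VH.Nonempty) :
    ∃ y ∈ VH, ∀ z ∈ VH, Relation.ReflTransGen (RelH A VH) y z := by
  classical
  set F : Finset V := Finset.univ.filter (· ∈ VH) with hF
  have hmemF : ∀ v, v ∈ F ↔ v ∈ VH := by intro v; simp [hF]
  have hFne : F.Nonempty := ⟨hne.choose, (hmemF _).mpr hne.choose_spec⟩
  obtain ⟨y, hyF, hymax⟩ := F.exists_max_image
    (fun y => (F.filter (fun z => Relation.ReflTransGen (RelH A VH) y z)).card) hFne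
  refine ⟨y, (hmemF y).mp hyF, ?_⟩
  intro z hz
  by_contra hnz
  have hzy : z ≠ y := by rintro rfl; exact hnz Relation.ReflTransGen.refl
  have hAyz : ¬ A y z := fun hA => hnz (Relation.ReflTransGen.single ⟨(hmemF y).mp hyF, hz, hA⟩)
  have hAzy : A z y := (hsc y z (Ne.symm hzy)).resolve_left hAyz
  have hsub : insert z (F.filter (fun w => Relation.ReflTransGen (RelH A VH) y w)) ⊆
      F.filter (fun w => Relation.ReflTransGen (RelH A VH) z w) := by
    intro w hw
    rcases Finset.mem_insert.mp hw with rfl | hw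
    · exact Finset.mem_filter.mpr ⟨(hmemF w).mpr hz, Relation.ReflTransGen.refl⟩
    · obtain ⟨hwF, hreach⟩ := Finset.mem_filter.mp hw
      exact Finset.mem_filter.mpr ⟨hwF,
        (Relation.ReflTransGen.single (show RelH A VH z y from ⟨hz, (hmemF y).mp hyF, hAzy⟩)).trans hreach⟩
  have hzmem : z ∉ F.filter (fun w => Relation.ReflTransGen (RelH A VH) y w) := by
    simp only [Finset.mem_filter]; rintro ⟨-, h⟩; exact hnz h
  have := Finset.card_le_card hsub
  rw [Finset.card_insert_of_notMem hzmem] at this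
  have := hymax z ((hmemF z).mpr hz)
  omega

lemma exists_coking {V : Type*} [Fintype V] {A : V → V → Prop} (hsc : Semicomplete A)
    (VH : Set V) (hne : VH.Nonempty) :
    ∃ y ∈ VH, ∀ z ∈ VH, Relation.ReflTransGen (RelH A VH) z y := by
  classical
  set F : Finset V := Finset.univ.filter (· ∈ VH) with hF
  have hmemF : ∀ v, v ∈ F ↔ v ∈ VH := by intro v; simp [hF]
  have hFne : F.Nonempty := ⟨hne.choose, (hmemF _).mpr hne.choose_spec⟩
  obtain ⟨y, hyF, hymax⟩ := F.exists_max_image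
    (fun y => (F.filter (fun z => Relation.ReflTransGen (RelH A VH) z y)).card) hFne
  refine ⟨y, (hmemF y).mp hyF, ?_⟩
  intro z hz
  by_contra hnz
  have hzy : z ≠ y := by rintro rfl; exact hnz Relation.ReflTransGen.refl
  have hAzy : ¬ A z y := fun hA => hnz (Relation.ReflTransGen.single ⟨hz, (hmemF y).mp hyF, hA⟩)
  have hAyz : A y z := (hsc y z (Ne.symm hzy)).resolve_right hAzy
  have hsub : insert z (F.filter (fun w => Relation.ReflTransGen (RelH A VH) w y)) ⊆
      F.filter (fun w => Relation.ReflTransGen (RelH A VH) w z) := by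
    intro w hw
    rcases Finset.mem_insert.mp hw with rfl | hw
    · exact Finset.mem_filter.mpr ⟨(hmemF w).mpr hz, Relation.ReflTransGen.refl⟩
    · obtain ⟨hwF, hreach⟩ := Finset.mem_filter.mp hw
      exact Finset.mem_filter.mpr ⟨hwF,
        hreach.trans (Relation.ReflTransGen.single ⟨(hmemF y).mp hyF, hz, hAyz⟩)⟩
  have hzmem : z ∉ F.filter (fun w => Relation.ReflTransGen (RelH A VH) w y) := by
    simp only [Finset.mem_filter]; rintro ⟨-, h⟩; exact hnz h
  have := Finset.card_le_card hsub
  rw [Finset.card_insert_of_notMem hzmem] at this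
  have := hymax z ((hmemF z).mpr hz)
  omega

lemma insert_false {V : Type*} [Fintype V] {A : V → V → Prop} {k : ℕ}
    {s : V} {t : Fin k → V} {L : Fin k → List V}
    (hL : IsSTSystem A s t L)
    (hmax : ∀ P : Fin k → List V, IsSTSystem A s t P →
      (coverSet P).ncard ≤ (coverSet L).ncard)
    (i : Fin k) (c : ℕ) (hc : c + 1 < (L i).length)
    (q : List V) (hq : q ≠ []) (hnd : q.Nodup)
    (hqH : ∀ x ∈ q, x ∉ coverSet L) (hch : q.Chain' A)
    {yh yl : V} (hhd : q.head? = some yh) (hlst : q.getLast? = some yl)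
    (h1 : A ((L i).get ⟨c, by omega⟩) yh)
    (h2 : A yl ((L i).get ⟨c+1, hc⟩)) : False := by
  classical
  set l := L i with hldef
  obtain ⟨hlne, hlnd, hlch, hlhd, hllst⟩ := hL.1 i
  rw [← hldef] at hlne hlnd hlch hlhd hllst
  have htd : l.take (c+1) ++ l.drop (c+1) = l := List.take_append_drop _ _
  have htne : l.take (c+1) ≠ [] := by
    have : (l.take (c+1)).length = c + 1 := by
      rw [List.length_take]; omega
    intro h; rw [h] at this; simp at this
  have hdne : l.drop (c+1) ≠ [] := by
    have : (l.drop (c+1)).length = l.length - (c+1) := by simp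
    intro h; rw [h] at this; simp at this; omega
  set newl : List V := l.take (c+1) ++ q ++ l.drop (c+1) with hnewl
  set newL : Fin k → List V := Function.update L i newl with hnewL
  have hmem_new : ∀ v, v ∈ newl ↔ v ∈ l ∨ v ∈ q := by
    intro v
    constructor
    · intro hv
      rcases List.mem_append.mp hv with hv | hv
      · rcases List.mem_append.mp hv with hv | hv
        · exact Or.inl (List.mem_of_mem_take hv)
        · exact Or.inr hv
      · exact Or.inl (List.mem_of_mem_drop hv)
    · intro hv
      rcases hv with hv | hv
      · rw [← htd] at hv
        rcases List.mem_append.mp hv with hv | hv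
        · exact List.mem_append.mpr (Or.inl (List.mem_append.mpr (Or.inl hv)))
        · exact List.mem_append.mpr (Or.inr hv)
      · exact List.mem_append.mpr (Or.inl (List.mem_append.mpr (Or.inr hv)))
  have hcovl : ∀ v ∈ l, v ∈ coverSet L := fun v hv => ⟨i, hv⟩
  -- nodup
  have htdnd : (l.take (c+1)).Nodup ∧ (l.drop (c+1)).Nodup ∧ (l.take (c+1)).Disjoint (l.drop (c+1)) := by
    rw [← htd] at hlnd
    exact List.nodup_append'.mp hlnd
  have hnewnd : newl.Nodup := by
    rw [hnewl, List.append_assoc, List.nodup_append']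
    refine ⟨htdnd.1, ?_, ?_⟩
    · rw [List.nodup_append']
      refine ⟨hnd, htdnd.2.1, ?_⟩
      intro x hx hx'
      exact hqH x hx (hcovl x (List.mem_of_mem_drop hx'))
    · intro x hx hx'
      rcases List.mem_append.mp hx' with h | h
      · exact hqH x h (hcovl x (List.mem_of_mem_take hx))
      · exact htdnd.2.2 hx h
  -- getLast? of take
  have hgl_take : (l.take (c+1)).getLast? = some (l.get ⟨c, by omega⟩) := by
    have h1' : (l.take (c+1)).length = c + 1 := by rw [List.length_take]; omega
    rw [List.getLast?_eq_getElem?]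
    rw [h1']
    simp only [Nat.add_sub_cancel]
    rw [List.getElem?_take, if_pos (by omega)]
    rw [List.getElem?_eq_getElem (by omega)]
    simp [List.get_eq_getElem]
  have hhd_drop : (l.drop (c+1)).head? = some (l.get ⟨c+1, hc⟩) := by
    rw [List.head?_drop]
    rw [List.getElem?_eq_getElem hc]
    simp [List.get_eq_getElem]
  -- chain'
  have htake_ch : (l.take (c+1)).Chain' A := hlch.take _
  have hdrop_ch : (l.drop (c+1)).Chain' A := hlch.drop _
  have hnewch : newl.Chain' A := by
    change List.IsChain A newl
    rw [hnewl, List.append_assoc, List.isChain_append]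
    refine ⟨htake_ch, ?_, ?_⟩
    · rw [List.isChain_append]
      refine ⟨hch, hdrop_ch, ?_⟩
      intro x hx y hy
      rw [hlst] at hx; cases hx
      rw [hhd_drop] at hy; cases hy
      exact h2
    · intro x hx y hy
      rw [hgl_take] at hx; cases hx
      rw [List.head?_append_of_ne_nil _ hq] at hy
      rw [hhd] at hy; cases hy
      exact h1
  -- head? and getLast?
  have hlhd' : (l.take (c+1)).head? = some s := by
    have h' : (l.take (c+1) ++ l.drop (c+1)).head? = some s := by rw [htd]; exact hlhd
    rwa [List.head?_append_of_ne_nil _ htne] at h'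
  have hllst' : (l.drop (c+1)).getLast? = some (t i) := by
    have h' : (l.take (c+1) ++ l.drop (c+1)).getLast? = some (t i) := by rw [htd]; exact hllst
    rwa [List.getLast?_append_of_ne_nil _ hdne] at h'
  have hnewhd : newl.head? = some s := by
    rw [hnewl, List.append_assoc, List.head?_append_of_ne_nil _ htne]
    exact hlhd'
  have hnewlst : newl.getLast? = some (t i) := by
    rw [hnewl, List.getLast?_append_of_ne_nil _ hdne]
    exact hllst'
  -- system
  have hsys : IsSTSystem A s t newL := by
    constructor
    · intro j
      by_cases hji : j = i
      · subst hji
        rw [hnewL]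
        simp only [Function.update_self]
        exact ⟨by simp [hnewl, htne], hnewnd, hnewch, hnewhd, hnewlst⟩
      · rw [hnewL]; simp only [Function.update_of_ne hji]
        exact hL.1 j
    · intro j j' hjj' v hvj hvj'
      have hmem : ∀ j'' , ∀ v, v ∈ newL j'' → v ∈ L j'' ∨ v ∈ q ∧ j'' = i := by
        intro j'' v hv
        by_cases hji : j'' = i
        · subst hji
          rw [hnewL] at hv; simp only [Function.update_self] at hv
          rcases (hmem_new v).mp hv with h | h
          · exact Or.inl h
          · exact Or.inr ⟨h, rfl⟩
        · rw [hnewL] at hv; simp only [Function.update_of_ne hji] at hv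
          exact Or.inl hv
      rcases hmem j v hvj with h | ⟨hvq, rfl⟩
      · rcases hmem j' v hvj' with h' | ⟨hvq', rfl⟩
        · exact hL.2 j j' hjj' v h h'
        · exact absurd ⟨j, h⟩ (hqH v hvq')
      · rcases hmem j' v hvj' with h' | ⟨hvq', rfl⟩
        · exact absurd ⟨j', h'⟩ (hqH v hvq)
        · exact absurd rfl hjj'
    -- coverage strictly increases
  have hyhq : yh ∈ q := List.mem_of_mem_head? (by rw [hhd]; rfl)
  have hss : coverSet L ⊂ coverSet newL := by
    constructor
    · rintro v ⟨j, hv⟩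
      by_cases hji : j = i
      · refine ⟨i, ?_⟩
        rw [hnewL]
        simp only [Function.update_self]
        exact (hmem_new v).mpr (Or.inl (show v ∈ L i from hji ▸ hv))
      · refine ⟨j, ?_⟩
        rw [hnewL]
        simpa only [Function.update_of_ne hji] using hv
    · intro hsub
      have hyhnew : yh ∈ newL i := by
        rw [hnewL]
        simp only [Function.update_self]
        exact (hmem_new yh).mpr (Or.inr hyhq)
      exact hqH yh hyhq (hsub ⟨i, hyhnew⟩)
  have hlt := Set.ncard_lt_ncard hss (Set.toFinite _)
  exact absurd (hmax newL hsys) (by omega)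

set_option maxHeartbeats 2000000 in
theorem stmt_7 {V : Type*} [Fintype V] (A : V → V → Prop)
    (hirr : Irreflexive A) (hsc : Semicomplete A)
    (k : ℕ) (hk : 2 ≤ k)
    (hcard : (9 * k) ^ 5 ≤ Fintype.card V)
    (hdeg : ∀ v : V, (Fintype.card V + k) / 2 ≤ {w : V | A v w}.ncard ∧
      (Fintype.card V + k) / 2 ≤ {w : V | A w v}.ncard)
    (s : V) (t : Fin k → V) (htinj : Function.Injective t)
    (hst : ∀ i, t i ≠ s)
    (L : Fin k → List V) (hL : IsSTSystem A s t L)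
    (hmax : ∀ P : Fin k → List V, IsSTSystem A s t P →
      (coverSet P).ncard ≤ (coverSet L).ncard)
    (hncov : coverSet L ≠ Set.univ)
    (VH : Set V) (hVH : VH = (coverSet L)ᶜ)
    (F R : Set V)
    (hF : F = {x ∈ coverSet L | ∃ y ∈ VH, A y x})
    (hR : R = {x ∈ coverSet L | ∃ y ∈ VH, A x y}) :
    ∀ (i : Fin k) (a b : ℕ) (hab : a < b) (hb : b < (L i).length),
      (¬ ∃ y₁ ∈ VH, ∃ y₂ ∈ VH,
        A ((L i).get ⟨a, hab.trans hb⟩) y₁ ∧ A y₂ ((L i).get ⟨b, hb⟩)) ∧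
      ¬ ((L i).get ⟨a, hab.trans hb⟩ ∈ R ∧ (L i).get ⟨b, hb⟩ ∈ F) := by
  classical
  subst hVH hF hR
  have hget0 : ∀ (j : Fin k) (h0 : 0 < (L j).length), (L j).get ⟨0, h0⟩ = s := by
    intro j h0
    have hh := (hL.1 j).2.2.2.1
    have h1 : (L j)[0]? = some s := by rw [← List.head?_eq_getElem?]; exact hh
    rw [List.getElem?_eq_getElem h0] at h1
    simpa [List.get_eq_getElem] using Option.some.inj h1
  have hnoins : ∀ (j : Fin k) (c : ℕ) (hc : c + 1 < (L j).length) (y z : V),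
      y ∈ (coverSet L)ᶜ → Relation.ReflTransGen (RelH A ((coverSet L)ᶜ)) y z →
      A ((L j).get ⟨c, Nat.lt_of_succ_lt hc⟩) y → A z ((L j).get ⟨c+1, hc⟩) → False := by
    intro j c hc y z hy hr hA1 hA2
    obtain ⟨q, hq, hnd, hVHq, hch, hhd, hlst⟩ := reach_path hr hy
    exact insert_false hL hmax j c hc q hq hnd (fun x hx => hVHq x hx) hch hhd hlst hA1 hA2
  suffices main : ∀ (i : Fin k) (a b : ℕ) (hab : a < b) (hb : b < (L i).length),
      ¬ ∃ y₁ ∈ (coverSet L)ᶜ, ∃ y₂ ∈ (coverSet L)ᶜ,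
        A ((L i).get ⟨a, hab.trans hb⟩) y₁ ∧ A y₂ ((L i).get ⟨b, hb⟩) by
    intro i a b hab hb
    refine ⟨main i a b hab hb, ?_⟩
    rintro ⟨⟨-, y₁, hy₁, hA1⟩, ⟨-, y₂, hy₂, hA2⟩⟩
    exact main i a b hab hb ⟨y₁, hy₁, y₂, hy₂, hA1, hA2⟩
  by_contra hbadex
  push_neg at hbadex
  obtain ⟨i0, a0, b0, hab0, hb0, y₁0, hy₁0, y₂0, hy₂0, hA10, hA20⟩ := hbadex
  set Bad : ℕ → Prop := fun m => ∃ (j : Fin k) (a b : ℕ) (hab : a < b) (hbl : b < (L j).length),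
    b = a + m ∧ ∃ y₁ ∈ (coverSet L)ᶜ, ∃ y₂ ∈ (coverSet L)ᶜ,
      A ((L j).get ⟨a, hab.trans hbl⟩) y₁ ∧ A y₂ ((L j).get ⟨b, hbl⟩) with hBadDef
  have hBadex : ∃ m, Bad m :=
    ⟨b0 - a0, i0, a0, b0, hab0, hb0, by omega, y₁0, hy₁0, y₂0, hy₂0, hA10, hA20⟩
  set m0 := Nat.find hBadex with hm0def
  have hm0 : Bad m0 := Nat.find_spec hBadex
  have hm0min : ∀ m' < m0, ¬ Bad m' := fun m' h => Nat.find_min hBadex h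
  obtain ⟨i, a, b, hab, hb, hbm, y₁, hy₁, y₂, hy₂, hA1, hA2⟩ := hm0
  have hm0_1 : m0 = 1 := by
    by_contra hne1
    have h2m : 2 ≤ m0 := by omega
    have ha1 : a + 1 < (L i).length := by omega
    have hzcov : (L i).get ⟨a+1, ha1⟩ ∈ coverSet L := ⟨i, (L i).get_mem _⟩
    have hzne : (L i).get ⟨a+1, ha1⟩ ≠ y₂ := by
      intro e; rw [e] at hzcov; exact hy₂ hzcov
    rcases hsc _ y₂ hzne with hzy2 | hy2z
    · exact hm0min (m0 - 1) (by omega)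
        ⟨i, a+1, b, by omega, hb, by omega, y₂, hy₂, y₂, hy₂, hzy2, hA2⟩
    · exact hm0min 1 (by omega)
        ⟨i, a, a+1, by omega, ha1, rfl, y₁, hy₁, y₂, hy₂, hA1, hy2z⟩
  rw [hm0_1] at hbm
  subst hbm
  -- kings
  have hHne : ((coverSet L)ᶜ).Nonempty := Set.nonempty_compl.mpr hncov
  obtain ⟨yk, hykH, hyking⟩ := exists_king hsc _ hHne
  obtain ⟨yc, hycH, hycok⟩ := exists_coking hsc _ hHne
  by_cases hreach : Relation.ReflTransGen (RelH A ((coverSet L)ᶜ)) yc yk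
  · exact hnoins i a hb y₁ y₂ hy₁ ((hycok y₁ hy₁).trans (hreach.trans (hyking y₂ hy₂))) hA1 hA2
  have hK5 : ∀ (j : Fin k) (c r : ℕ) (hr : r < (L j).length) (hcr : c ≤ r),
      A ((L j).get ⟨c, by omega⟩) yk →
      A ((L j).get ⟨r, hr⟩) yk ∧
        (c < r → ∀ y ∈ (coverSet L)ᶜ, ¬ A y ((L j).get ⟨r, hr⟩)) := by
    intro j c r
    induction r with
    | zero =>
      intro hr hcr hAc
      have hc0 : c = 0 := by omega
      subst hc0
      exact ⟨hAc, by omega⟩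
    | succ r ih =>
      intro hr hcr hAc
      by_cases hcr' : c = r + 1
      · subst hcr'
        exact ⟨hAc, by omega⟩
      · have hr' : r < (L j).length := by omega
        have hAr : A ((L j).get ⟨r, hr'⟩) yk := (ih hr' (by omega) hAc).1
        have hnoy : ∀ y ∈ (coverSet L)ᶜ, ¬ A y ((L j).get ⟨r+1, hr⟩) := by
          intro y hy hAy
          exact hnoins j r hr yk y hykH (hyking y hy) hAr hAy
        have hne : (L j).get ⟨r+1, hr⟩ ≠ yk := by
          intro e
          exact hykH (e ▸ (⟨j, (L j).get_mem _⟩ : (L j).get ⟨r+1, hr⟩ ∈ coverSet L))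
        have hAr1 : A ((L j).get ⟨r+1, hr⟩) yk :=
          (hsc _ yk hne).resolve_right (fun h => hnoy yk hykH h)
        exact ⟨hAr1, fun _ => hnoy⟩
  have h0i : (0:ℕ) < (L i).length := by omega
  have hsyk : ¬ A s yk := by
    intro hA
    have hA0 : A ((L i).get ⟨0, h0i⟩) yk := by rw [hget0 i h0i]; exact hA
    exact (hK5 i 0 (a+1) hb (by omega) hA0).2 (by omega) y₂ hy₂ hA2
  have hsmem : s ∈ coverSet L := ⟨i, List.mem_of_mem_head? (hL.1 i).2.2.2.1⟩
  have hycs_ne : yc ≠ s := by intro e; rw [e] at hycH; exact hycH hsmem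
  -- counting setup
  set n := Fintype.card V with hn
  set HF : Finset V := Finset.univ.filter (· ∈ (coverSet L)ᶜ) with hHF
  set CF : Finset V := Finset.univ.filter (· ∈ coverSet L) with hCF
  set OutF : Finset V := Finset.univ.filter (fun w => A yc w) with hOutF
  set InF : Finset V := Finset.univ.filter (fun w => A w yk) with hInF
  set O1 : Finset V := (HF.filter (fun z => Relation.ReflTransGen (RelH A ((coverSet L)ᶜ)) yc z)).erase yc with hO1
  set I2 : Finset V := (HF.filter (fun z => Relation.ReflTransGen (RelH A ((coverSet L)ᶜ)) z yk)).erase yk with hI2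
  have hdOut : (n + k) / 2 ≤ OutF.card := by
    have h := (hdeg yc).1
    rwa [Set.ncard_eq_toFinset_card', Set.toFinset_setOf] at h
  have hdIn : (n + k) / 2 ≤ InF.card := by
    have h := (hdeg yk).2
    rwa [Set.ncard_eq_toFinset_card', Set.toFinset_setOf] at h
  have hsplit : ∀ S : Finset V, S.card = (S ∩ HF).card + (S ∩ CF).card := by
    intro S
    rw [← Finset.card_union_of_disjoint]
    · congr 1
      ext x
      simp only [Finset.mem_union, Finset.mem_inter, hHF, hCF, Finset.mem_filter,
        Finset.mem_univ, true_and, Set.mem_compl_iff]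
      tauto
    · simp only [Finset.disjoint_left, Finset.mem_inter, hHF, hCF, Finset.mem_filter,
        Finset.mem_univ, true_and, Set.mem_compl_iff]
      tauto
  have hOutH : (OutF ∩ HF) ⊆ O1 := by
    intro w hw
    simp only [Finset.mem_inter, hOutF, hHF, Finset.mem_filter, Finset.mem_univ, true_and] at hw
    obtain ⟨hAw, hwH⟩ := hw
    rw [hO1]
    refine Finset.mem_erase.mpr ⟨?_, Finset.mem_filter.mpr ⟨?_, ?_⟩⟩
    · intro e; rw [e] at hAw; exact hirr yc hAw
    · rw [hHF]; simp only [Finset.mem_filter, Finset.mem_univ, true_and]; exact hwH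
    · exact Relation.ReflTransGen.single ⟨hycH, hwH, hAw⟩
  have hInH : (InF ∩ HF) ⊆ I2 := by
    intro w hw
    simp only [Finset.mem_inter, hInF, hHF, Finset.mem_filter, Finset.mem_univ, true_and] at hw
    obtain ⟨hAw, hwH⟩ := hw
    rw [hI2]
    refine Finset.mem_erase.mpr ⟨?_, Finset.mem_filter.mpr ⟨?_, ?_⟩⟩
    · intro e; rw [e] at hAw; exact hirr yk hAw
    · rw [hHF]; simp only [Finset.mem_filter, Finset.mem_univ, true_and]; exact hwH
    · exact Relation.ReflTransGen.single ⟨hwH, hykH, hAw⟩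
  have hyc_ne_yk : yc ≠ yk := by intro e; exact hreach (e ▸ Relation.ReflTransGen.refl)
  have hykHF : yk ∈ HF := by
    rw [hHF]; simp only [Finset.mem_filter, Finset.mem_univ, true_and]; exact hykH
  have hycHF : yc ∈ HF := by
    rw [hHF]; simp only [Finset.mem_filter, Finset.mem_univ, true_and]; exact hycH
  have hO1I2 : O1.card + I2.card + 2 ≤ HF.card := by
    have hdisj : Disjoint O1 I2 := by
      rw [Finset.disjoint_left]
      intro x hx hx'
      rw [hO1] at hx; rw [hI2] at hx'
      have h1 := (Finset.mem_filter.mp (Finset.mem_of_mem_erase hx)).2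
      have h2 := (Finset.mem_filter.mp (Finset.mem_of_mem_erase hx')).2
      exact hreach (h1.trans h2)
    have hsub : O1 ∪ I2 ⊆ (HF.erase yk).erase yc := by
      intro x hx
      rcases Finset.mem_union.mp hx with hx | hx
      · rw [hO1] at hx
        obtain ⟨hne, hx⟩ := Finset.mem_erase.mp hx
        obtain ⟨hxHF, hrx⟩ := Finset.mem_filter.mp hx
        refine Finset.mem_erase.mpr ⟨hne, Finset.mem_erase.mpr ⟨?_, hxHF⟩⟩
        intro e; subst e; exact hreach hrx
      · rw [hI2] at hx
        obtain ⟨hne, hx⟩ := Finset.mem_erase.mp hx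
        obtain ⟨hxHF, hrx⟩ := Finset.mem_filter.mp hx
        refine Finset.mem_erase.mpr ⟨?_, Finset.mem_erase.mpr ⟨hne, hxHF⟩⟩
        intro e; subst e; exact hreach hrx
    have h1 := Finset.card_le_card hsub
    rw [Finset.card_union_of_disjoint hdisj] at h1
    have hycmem : yc ∈ HF.erase yk := Finset.mem_erase.mpr ⟨hyc_ne_yk, hycHF⟩
    have e1 := Finset.card_erase_add_one hycmem
    have e2 := Finset.card_erase_add_one hykHF
    omega
  have hcard_HC : CF.card + HF.card = n := by
    have hcompl : HF = CFᶜ := by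
      ext x
      simp [hHF, hCF, Set.mem_compl_iff]
    rw [hcompl]
    exact Finset.card_add_card_compl CF
  have hsCF : s ∈ CF := by
    rw [hCF]; simp only [Finset.mem_filter, Finset.mem_univ, true_and]; exact hsmem
  by_cases hycs : A yc s
  · -- main case
    set Aset : Fin k → Finset V := fun j => (L j).toFinset.filter (fun w => A yc w) with hAset
    set Bset : Fin k → Finset V := fun j => (L j).toFinset.filter (fun w => A w yk) with hBset
    have hAB : ∀ j : Fin k, (Aset j).card + (Bset j).card ≤ (L j).length + 1 := by
      intro j
      have hinter : ((Aset j) ∩ (Bset j)).card ≤ 1 := by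
        rw [Finset.card_le_one]
        intro u hu v hv
        by_contra huv
        simp only [hAset, hBset, Finset.mem_inter, Finset.mem_filter, List.mem_toFinset] at hu hv
        obtain ⟨⟨huL, hAu⟩, -, hBu⟩ := hu
        obtain ⟨⟨hvL, hAv⟩, -, hBv⟩ := hv
        obtain ⟨qu, hqu⟩ := List.mem_iff_get.mp huL
        obtain ⟨qv, hqv⟩ := List.mem_iff_get.mp hvL
        have hquv : qu.val ≠ qv.val := by
          intro e
          apply huv
          rw [← hqu, ← hqv]
          congr 1
          exact Fin.ext e
        rcases Nat.lt_or_ge qu.val qv.val with hlt | hge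
        · have := (hK5 j qu.val qv.val qv.isLt (le_of_lt hlt)
            (by rw [show (L j).get ⟨qu.val, by omega⟩ = u from by rw [← hqu]]; exact hBu)).2 hlt yc hycH
          rw [show (L j).get ⟨qv.val, qv.isLt⟩ = v from by rw [← hqv]] at this
          exact this hAv
        · have hlt' : qv.val < qu.val := by omega
          have := (hK5 j qv.val qu.val qu.isLt (le_of_lt hlt')
            (by rw [show (L j).get ⟨qv.val, by omega⟩ = v from by rw [← hqv]]; exact hBv)).2 hlt' yc hycH
          rw [show (L j).get ⟨qu.val, qu.isLt⟩ = u from by rw [← hqu]] at this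
          exact this hAu
      have hun : ((Aset j) ∪ (Bset j)).card ≤ (L j).length := by
        refine le_trans (Finset.card_le_card ?_) (L j).toFinset_card_le
        intro x hx
        rcases Finset.mem_union.mp hx with hx | hx
        · exact (Finset.mem_filter.mp hx).1
        · exact (Finset.mem_filter.mp hx).1
      have := Finset.card_union_add_card_inter (Aset j) (Bset j)
      omega
    have hlen : ∀ j : Fin k, (L j).toFinset.card = (L j).length :=
      fun j => List.toFinset_card_of_nodup (hL.1 j).2.1
    have hsLj : ∀ j : Fin k, s ∈ (L j).toFinset :=
      fun j => List.mem_toFinset.mpr (List.mem_of_mem_head? (hL.1 j).2.2.2.1)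
    have hSL : (∑ j, (L j).length) + 1 = CF.card + k := by
      have hdisj : ∀ (x : Fin k), x ∈ Finset.univ → ∀ (y : Fin k), y ∈ Finset.univ → x ≠ y →
          Disjoint ((L x).toFinset.erase s) ((L y).toFinset.erase s) := by
        intro x _ y _ hxy
        rw [Finset.disjoint_left]
        intro v hv hv'
        obtain ⟨hvs, hvx⟩ := Finset.mem_erase.mp hv
        obtain ⟨-, hvy⟩ := Finset.mem_erase.mp hv'
        exact hvs (hL.2 x y hxy v (List.mem_toFinset.mp hvx) (List.mem_toFinset.mp hvy))
      have hbu : Finset.univ.biUnion (fun j => (L j).toFinset.erase s) = CF.erase s := by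
        ext v
        simp only [Finset.mem_biUnion, Finset.mem_univ, true_and, Finset.mem_erase,
          List.mem_toFinset, hCF, Finset.mem_filter, coverSet, Set.mem_setOf_eq]
        tauto
      have hcb := Finset.card_biUnion hdisj
      rw [hbu] at hcb
      have hce := Finset.card_erase_add_one hsCF
      have hsum1 : ∀ j : Fin k, ((L j).toFinset.erase s).card + 1 = (L j).length := by
        intro j
        rw [← hlen j]
        exact Finset.card_erase_add_one (hsLj j)
      have : ∑ j, (L j).length = ∑ j, (((L j).toFinset.erase s).card + 1) :=
        Finset.sum_congr rfl (fun j _ => (hsum1 j).symm)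
      rw [this, Finset.sum_add_distrib, Finset.sum_const, Finset.card_univ,
        Fintype.card_fin, smul_eq_mul, mul_one, ← hcb]
      omega
    have hsum : (∑ j, (Aset j).card) + (∑ j, (Bset j).card) ≤ (∑ j, (L j).length) + k := by
      have h1 : (∑ j, ((Aset j).card + (Bset j).card)) ≤ ∑ j, ((L j).length + 1) :=
        Finset.sum_le_sum (fun j _ => hAB j)
      rw [Finset.sum_add_distrib, Finset.sum_add_distrib, Finset.sum_const,
        Finset.card_univ, Fintype.card_fin, smul_eq_mul, mul_one] at h1
      exact h1
    have hsAset : ∀ j : Fin k, s ∈ Aset j := by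
      intro j
      rw [hAset]
      exact Finset.mem_filter.mpr ⟨hsLj j, hycs⟩
    have hOutL : (OutF ∩ CF).card + k ≤ (∑ j, (Aset j).card) + 1 := by
      have hsub : (OutF ∩ CF).erase s ⊆ Finset.univ.biUnion (fun j => (Aset j).erase s) := by
        intro w hw
        obtain ⟨hws, hw⟩ := Finset.mem_erase.mp hw
        simp only [Finset.mem_inter, hOutF, hCF, Finset.mem_filter, Finset.mem_univ,
          true_and] at hw
        obtain ⟨hAw, j, hwj⟩ := hw
        refine Finset.mem_biUnion.mpr ⟨j, Finset.mem_univ j, Finset.mem_erase.mpr ⟨hws, ?_⟩⟩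
        rw [hAset]
        exact Finset.mem_filter.mpr ⟨List.mem_toFinset.mpr hwj, hAw⟩
      have h1 := le_trans (Finset.card_le_card hsub) (Finset.card_biUnion_le)
      have hsOC : s ∈ OutF ∩ CF := by
        refine Finset.mem_inter.mpr ⟨?_, hsCF⟩
        rw [hOutF]; simp only [Finset.mem_filter, Finset.mem_univ, true_and]; exact hycs
      have h2 := Finset.card_erase_add_one hsOC
      have h3 : ∀ j : Fin k, ((Aset j).erase s).card + 1 = (Aset j).card :=
        fun j => Finset.card_erase_add_one (hsAset j)
      have h4 : ∑ j, (Aset j).card = ∑ j, (((Aset j).erase s).card + 1) :=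
        Finset.sum_congr rfl (fun j _ => (h3 j).symm)
      rw [Finset.sum_add_distrib, Finset.sum_const, Finset.card_univ, Fintype.card_fin,
        smul_eq_mul, mul_one] at h4
      omega
    have hInL : (InF ∩ CF).card ≤ ∑ j, (Bset j).card := by
      have hsub : (InF ∩ CF) ⊆ Finset.univ.biUnion Bset := by
        intro w hw
        simp only [Finset.mem_inter, hInF, hCF, Finset.mem_filter, Finset.mem_univ,
          true_and] at hw
        obtain ⟨hAw, j, hwj⟩ := hw
        refine Finset.mem_biUnion.mpr ⟨j, Finset.mem_univ j, ?_⟩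
        rw [hBset]
        exact Finset.mem_filter.mpr ⟨List.mem_toFinset.mpr hwj, hAw⟩
      exact le_trans (Finset.card_le_card hsub) (Finset.card_biUnion_le)
    have hsO := hsplit OutF
    have hsI := hsplit InF
    have c1 := Finset.card_le_card hOutH
    have c2 := Finset.card_le_card hInH
    omega
  · -- subcase
    have hsyc : A s yc := (hsc yc s hycs_ne).resolve_left hycs
    have hdown : ∀ (j : Fin k) (r : ℕ) (hr : r < (L j).length),
        A ((L j).get ⟨r, hr⟩) yc ∧ (0 < r → ¬ A yc ((L j).get ⟨r, hr⟩)) := by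
      intro j r
      induction r with
      | zero =>
        intro hr
        constructor
        · rw [hget0 j hr]; exact hsyc
        · omega
      | succ r ih =>
        intro hr
        have hr' : r < (L j).length := by omega
        have hAr := (ih hr').1
        have hnA : ¬ A yc ((L j).get ⟨r+1, hr⟩) := by
          intro hA
          exact hnoins j r hr yc yc hycH Relation.ReflTransGen.refl hAr hA
        have hne : (L j).get ⟨r+1, hr⟩ ≠ yc := by
          intro e
          exact hycH (e ▸ (⟨j, (L j).get_mem _⟩ : (L j).get ⟨r+1, hr⟩ ∈ coverSet L))
        exact ⟨(hsc _ yc hne).resolve_right hnA, fun _ => hnA⟩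
    have hOutL1 : (OutF ∩ CF) ⊆ {s} := by
      intro w hw
      simp only [Finset.mem_inter, hOutF, hCF, Finset.mem_filter, Finset.mem_univ,
        true_and] at hw
      obtain ⟨hAw, hwcov⟩ := hw
      obtain ⟨j, hwj⟩ := hwcov
      obtain ⟨qv, hqv⟩ := List.mem_iff_get.mp hwj
      rcases Nat.eq_zero_or_pos qv.val with h0 | hpos
      · have hws : (L j).get qv = s := by
          rw [show qv = (⟨0, by omega⟩ : Fin (L j).length) from Fin.ext h0]
          exact hget0 j (by omega)
        rw [Finset.mem_singleton, ← hqv, hws]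
      · exfalso
        have hcon := (hdown j qv.val qv.isLt).2 hpos
        rw [show ((L j).get ⟨qv.val, qv.isLt⟩) = w from by rw [← hqv]] at hcon
        exact hcon hAw
    have hInL1 : (InF ∩ CF) ⊆ CF.erase s := by
      intro w hw
      obtain ⟨hwI, hwC⟩ := Finset.mem_inter.mp hw
      refine Finset.mem_erase.mpr ⟨?_, hwC⟩
      intro e
      subst e
      apply hsyk
      simpa [hInF] using hwI
    have c1 := Finset.card_le_card hOutH
    have c2 := Finset.card_le_card hInH
    have c3 : (OutF ∩ CF).card ≤ 1 := by
      have := Finset.card_le_card hOutL1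
      simpa using this
    have c4 : (InF ∩ CF).card + 1 ≤ CF.card := by
      have h1 := Finset.card_le_card hInL1
      have h2 := Finset.card_erase_add_one hsCF
      omega
    have hsO := hsplit OutF
    have hsI := hsplit InF
    omega
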